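/- arXiv:2302.06607 — 2 statements merged into one kernel-verified Lean document; each statement's English description precedes it below -/
import Mathlib

section
/- Let f : R^n → R be μ-strongly concave and Φ : R^m → R^n be affine, Φ(w) = Aw + b. Then g(w) = f(Φ(w)) is (σ_min(A)²·μ)-PL with respect to maximization on the affine image: (1/2)‖∇g(w)‖² ≥ σ_min(A)²·μ·(max_v g(v) − g(w)) for all w, where σ_min(A) is the smallest nonzero singular value of A, provided the maximum of f over the range of Φ is attained. -/
set_option maxHeartbeats 1000000 in
/-- A μ-strongly concave function composed with an affine map Φ(w) = T w + b is
(σ_min(T)²·μ)-PL for maximization, where σ ≤ σ_min(T) lower-bounds ‖T x‖/‖x‖ on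
the orthogonal complement of the kernel of T. -/
theorem stmt4 {n m : ℕ} (f : EuclideanSpace ℝ (Fin n) → ℝ) (μ : ℝ) (hμ : 0 < μ)
    (hdiff : Differentiable ℝ f)
    (hsc : ∀ x y, f y ≤ f x + (inner ℝ (gradient f x) (y - x) : ℝ) - (μ/2) * ‖y - x‖ ^ 2)
    (T : EuclideanSpace ℝ (Fin m) →L[ℝ] EuclideanSpace ℝ (Fin n))
    (b : EuclideanSpace ℝ (Fin n)) (σ : ℝ) (hσpos : 0 < σ)
    (hσ : ∀ x ∈ (LinearMap.ker (T : EuclideanSpace ℝ (Fin m) →ₗ[ℝ] EuclideanSpace ℝ (Fin n)))ᗮ,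
      σ * ‖x‖ ≤ ‖T x‖)
    (g : EuclideanSpace ℝ (Fin m) → ℝ) (hg : ∀ w, g w = f (T w + b))
    (gstar : ℝ) (hatt : ∃ w, g w = gstar) (hub : ∀ w, g w ≤ gstar) :
    ∀ w, σ ^ 2 * μ * (gstar - g w) ≤ (1/2) * ‖gradient g w‖ ^ 2 := by
  intro w
  obtain ⟨w₀, hw₀⟩ := hatt
  set x := T w + b with hx
  set u := gradient f x with hu
  -- gradient of g
  have hgfun : g = fun v => f (T v + b) := funext hg
  have hgradg : gradient g w = ContinuousLinearMap.adjoint T u := by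
    have hf' : HasFDerivAt f (InnerProductSpace.toDual ℝ _ u) x :=
      (hasGradientAt_iff_hasFDerivAt.mp ((hdiff x).hasGradientAt))
    have haff : HasFDerivAt (fun v => T v + b) T w := (T.hasFDerivAt).add_const b
    have hcomp : HasFDerivAt g ((InnerProductSpace.toDual ℝ _ u).comp T) w := by
      rw [hgfun]; exact hf'.comp w haff
    have heq : (InnerProductSpace.toDual ℝ _ u).comp (T :
        EuclideanSpace ℝ (Fin m) →L[ℝ] EuclideanSpace ℝ (Fin n))
        = InnerProductSpace.toDual ℝ _ (ContinuousLinearMap.adjoint T u) := by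
      ext v
      simp [ContinuousLinearMap.adjoint_inner_left, real_inner_comm]
    have : HasGradientAt g (ContinuousLinearMap.adjoint T u) w := by
      rw [hasGradientAt_iff_hasFDerivAt, ← heq]; exact hcomp
    exact this.gradient
  set K := LinearMap.ker (T : EuclideanSpace ℝ (Fin m) →ₗ[ℝ] EuclideanSpace ℝ (Fin n)) with hK
  set d := w₀ - w with hd
  set dp : EuclideanSpace ℝ (Fin m) := (Submodule.orthogonalProjection Kᗮ d : EuclideanSpace ℝ (Fin m)) with hdp
  have hdpmem : dp ∈ Kᗮ := (Submodule.orthogonalProjection Kᗮ d).2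
  have hdk : d - dp ∈ K := by
    have := Submodule.sub_starProjection_mem_orthogonal (K := Kᗮ) d
    rwa [Submodule.orthogonal_orthogonal] at this
  have hTd : T d = T dp := by
    have h0 : T (d - dp) = 0 := hdk
    have : T d - T dp = 0 := by rw [← map_sub]; exact h0
    exact sub_eq_zero.mp this
  have hTdeq : T d = T dp := hTd
  -- strong concavity applied at y = T w₀ + b
  have hy : (T w₀ + b) - x = T d := by simp [hx, hd, map_sub]
  have hsc' := hsc x (T w₀ + b)
  rw [hy, ← hg w, ← hg w₀, hw₀] at hsc'
  have hinner : (inner ℝ u (T d) : ℝ) ≤ ‖ContinuousLinearMap.adjoint T u‖ * ‖dp‖ := by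
    rw [hTdeq, ← ContinuousLinearMap.adjoint_inner_left]
    exact real_inner_le_norm _ _
  have hnorm : σ * ‖dp‖ ≤ ‖T d‖ := by rw [hTdeq]; exact hσ dp hdpmem
  have hμ2 : (μ/2) * (σ^2 * ‖dp‖^2) ≤ (μ/2) * ‖T d‖^2 := by
    have h1 : (0:ℝ) ≤ σ * ‖dp‖ := by positivity
    have h2 := pow_le_pow_left₀ h1 hnorm 2
    nlinarith
  set a := ‖ContinuousLinearMap.adjoint T u‖ with ha
  set r := ‖dp‖ with hr
  have hr0 : (0:ℝ) ≤ r := norm_nonneg _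
  have key : gstar - g w ≤ a * r - (μ/2) * (σ^2 * r^2) := by linarith
  rw [hgradg, ← ha]
  have h1 : σ^2 * μ * (gstar - g w) ≤ σ^2 * μ * (a * r - (μ/2) * (σ^2 * r^2)) :=
    mul_le_mul_of_nonneg_left key (by positivity)
  nlinarith [sq_nonneg (a - σ^2 * μ * r)]
end

section
/- (Zero exploitability of market clearing with binding budgets) In the exchange-economy pseudo-game, if prices p* ∈ Δ^m and allocations X* satisfy: (a) each x_i* maximizes u_i over the budget set {x : x·p* ≤ e_i·p*}, (b) Σ_i x_i* ≤ Σ_i e_i, and (c) p*·(Σ_i x_i* − Σ_i e_i) = 0, then the exploitability of (X*, p*) in the pseudo-game is zero, i.e., (X*, p*) is a GNE. -/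
/-- Zero exploitability of market clearing with binding budgets: if every buyer's
allocation is budget-feasible and utility-maximizing, markets clear, and the value of
excess demand is zero, then the exploitability of (X*, p*) in the exchange-economy
pseudo-game is zero, i.e., (X*, p*) is a GNE. -/
theorem stmt17 {n m : ℕ} (hm : 0 < m) (u : Fin n → (Fin m → ℝ) → ℝ)
    (e x : Fin n → Fin m → ℝ) (p : Fin m → ℝ)
    (hp : (∀ j, 0 ≤ p j) ∧ ∑ j, p j = 1)
    (ha : ∀ i, (∀ j, 0 ≤ x i j) ∧ (∑ j, x i j * p j ≤ ∑ j, e i j * p j) ∧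
      ∀ y : Fin m → ℝ, (∀ j, 0 ≤ y j) → (∑ j, y j * p j ≤ ∑ j, e i j * p j) →
        u i y ≤ u i (x i))
    (hb : ∀ j, ∑ i, x i j ≤ ∑ i, e i j)
    (hc : ∑ j, p j * ((∑ i, x i j) - ∑ i, e i j) = 0) :
    (∑ i, sSup ((fun y : Fin m → ℝ => u i y - u i (x i)) ''
        {y | (∀ j, 0 ≤ y j) ∧ ∑ j, y j * p j ≤ ∑ j, e i j * p j}))
      + sSup ((fun q : Fin m → ℝ =>
          (∑ j, q j * ((∑ i, x i j) - ∑ i, e i j))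
            - ∑ j, p j * ((∑ i, x i j) - ∑ i, e i j)) ''
        {q | (∀ j, 0 ≤ q j) ∧ ∑ j, q j = 1}) = 0 := by
  have hbuyer : ∀ i, sSup ((fun y : Fin m → ℝ => u i y - u i (x i)) ''
      {y | (∀ j, 0 ≤ y j) ∧ ∑ j, y j * p j ≤ ∑ j, e i j * p j}) = 0 := by
    intro i
    obtain ⟨hx0, hxb, hmax⟩ := ha i
    have hmem : x i ∈ {y : Fin m → ℝ | (∀ j, 0 ≤ y j) ∧ ∑ j, y j * p j ≤ ∑ j, e i j * p j} :=
      ⟨hx0, hxb⟩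
    have hub : ∀ z ∈ (fun y : Fin m → ℝ => u i y - u i (x i)) ''
        {y | (∀ j, 0 ≤ y j) ∧ ∑ j, y j * p j ≤ ∑ j, e i j * p j}, z ≤ 0 := by
      rintro z ⟨y, ⟨hy0, hyb⟩, rfl⟩
      have := hmax y hy0 hyb
      dsimp only; linarith
    apply le_antisymm
    · exact Real.sSup_le hub (le_refl 0) |>.trans_eq rfl
    · have h0 : (0 : ℝ) ∈ (fun y : Fin m → ℝ => u i y - u i (x i)) ''
          {y | (∀ j, 0 ≤ y j) ∧ ∑ j, y j * p j ≤ ∑ j, e i j * p j} :=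
        ⟨x i, hmem, by simp⟩
      exact le_csSup ⟨0, hub⟩ h0
  have hseller : sSup ((fun q : Fin m → ℝ =>
      (∑ j, q j * ((∑ i, x i j) - ∑ i, e i j))
        - ∑ j, p j * ((∑ i, x i j) - ∑ i, e i j)) ''
      {q | (∀ j, 0 ≤ q j) ∧ ∑ j, q j = 1}) = 0 := by
    have hub : ∀ z ∈ (fun q : Fin m → ℝ =>
        (∑ j, q j * ((∑ i, x i j) - ∑ i, e i j))
          - ∑ j, p j * ((∑ i, x i j) - ∑ i, e i j)) ''
        {q | (∀ j, 0 ≤ q j) ∧ ∑ j, q j = 1}, z ≤ 0 := by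
      rintro z ⟨q, ⟨hq0, _⟩, rfl⟩
      rw [hc]
      have : ∑ j, q j * ((∑ i, x i j) - ∑ i, e i j) ≤ 0 := by
        apply Finset.sum_nonpos
        intro j _
        exact mul_nonpos_of_nonneg_of_nonpos (hq0 j) (by linarith [hb j])
      dsimp only; linarith
    apply le_antisymm
    · exact Real.sSup_le hub (le_refl 0)
    · have h0 : (0 : ℝ) ∈ (fun q : Fin m → ℝ =>
          (∑ j, q j * ((∑ i, x i j) - ∑ i, e i j))
            - ∑ j, p j * ((∑ i, x i j) - ∑ i, e i j)) ''
          {q | (∀ j, 0 ≤ q j) ∧ ∑ j, q j = 1} := ⟨p, ⟨hp.1, hp.2⟩, by simp⟩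
      exact le_csSup ⟨0, hub⟩ h0
  simp [hbuyer, hseller]
end
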